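/- Let (S, E, T) be a closed and consistent observation table over input alphabet Σ and output alphabet O, and let (Q̂, q̂0, δ̂, L̂) be its hypothesis Moore machine with n = |Q̂| states. Then (1) the hypothesis machine is consistent with the table, and (2) every Moore machine over (Σ, O) that is consistent with the table and is not isomorphic to the hypothesis machine has strictly more than n states. -/

import Mathlib

/-- A Moore machine over input alphabet `σ` and output alphabet `O`, with state type `Q`:
initial state `q0`, transition function `δ`, and output labeling `L`. -/
structure MooreMachine (σ O Q : Type*) where
  q0 : Q
  δ : Q → σ → Q
  L : Q → O

/-- `M.run q w` is the extended transition function `δ*(q, w)`, the left fold of `δ` over `w`. -/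
def MooreMachine.run {σ O Q : Type*} (M : MooreMachine σ O Q) (q : Q) (w : List σ) : Q :=
  w.foldl M.δ q

/-- An observation table `(S, E, T)`: finite sets of prefixes `S` (prefix-closed, containing ε)
and suffixes `E` (suffix-closed, containing ε), and an entry function `T`. -/
structure ObsTable (σ O : Type*) where
  S : Finset (List σ)
  E : Finset (List σ)
  T : List σ → O
  nil_mem_S : [] ∈ S
  prefixClosed : ∀ s ∈ S, ∀ t : List σ, t <+: s → t ∈ S
  nil_mem_E : [] ∈ E
  suffixClosed : ∀ e ∈ E, ∀ t : List σ, t <:+ e → t ∈ E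

/-- `row(s) : E → O`, given by `row(s)(e) = T(s·e)`. -/
def ObsTable.row {σ O : Type*} (Ot : ObsTable σ O) (s : List σ) : {e // e ∈ Ot.E} → O :=
  fun e => Ot.T (s ++ e.1)

/-- The table is closed if every `row(s·σ)` with `s ∈ S` coincides with `row(s')` for some `s' ∈ S`. -/
def ObsTable.Closed {σ O : Type*} (Ot : ObsTable σ O) : Prop :=
  ∀ s ∈ Ot.S, ∀ a : σ, ∃ s' ∈ Ot.S, Ot.row (s ++ [a]) = Ot.row s'

/-- The table is consistent if equal rows of elements of `S` have equal one-step extensions. -/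
def ObsTable.Consistent {σ O : Type*} (Ot : ObsTable σ O) : Prop :=
  ∀ s₁ ∈ Ot.S, ∀ s₂ ∈ Ot.S,
    Ot.row s₁ = Ot.row s₂ → ∀ a : σ, Ot.row (s₁ ++ [a]) = Ot.row (s₂ ++ [a])

/-- `s ∈ S ∪ {t·σ : t ∈ S, σ ∈ Σ}`, the rows of the observation table. -/
def ObsTable.InTableRows {σ O : Type*} (Ot : ObsTable σ O) (s : List σ) : Prop :=
  s ∈ Ot.S ∨ ∃ t ∈ Ot.S, ∃ a : σ, s = t ++ [a]

/-- The state set of the hypothesis machine: `Q̂ = {row(s) : s ∈ S}`. -/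
def ObsTable.HQ {σ O : Type*} (Ot : ObsTable σ O) : Type _ :=
  {f : {e // e ∈ Ot.E} → O // ∃ s ∈ Ot.S, Ot.row s = f}

/-- The hypothesis state `row(s)` for `s ∈ S`. -/
def ObsTable.stateOf {σ O : Type*} (Ot : ObsTable σ O) (s : List σ) (hs : s ∈ Ot.S) : Ot.HQ :=
  ⟨Ot.row s, s, hs, rfl⟩

/-- `M` is the hypothesis Moore machine of the table: its initial state is `row(ε)`,
its transitions satisfy `δ̂(row(s), σ) = row(s·σ)` for `s ∈ S`, and its outputs satisfy
`L̂(row(s)) = row(s)(ε) = T(s)` for `s ∈ S`. -/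
def ObsTable.IsHypothesis {σ O : Type*} (Ot : ObsTable σ O)
    (M : MooreMachine σ O Ot.HQ) : Prop :=
  M.q0 = Ot.stateOf [] Ot.nil_mem_S ∧
  (∀ s, ∀ hs : s ∈ Ot.S, ∀ a : σ, (M.δ (Ot.stateOf s hs) a).1 = Ot.row (s ++ [a])) ∧
  (∀ s, ∀ hs : s ∈ Ot.S, M.L (Ot.stateOf s hs) = Ot.T s)

/-- The number of states of the hypothesis machine: the number of distinct rows `row(s)`, `s ∈ S`. -/
def ObsTable.numStates {σ O : Type*} [DecidableEq O] (Ot : ObsTable σ O) : ℕ :=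
  (Ot.S.image Ot.row).card

/-- A Moore machine is consistent with the table if `L(δ*(q0, s·e)) = T(s·e)` for every
`s ∈ S ∪ S·Σ` and every `e ∈ E`. -/
def MooreMachine.ConsistentWith {σ O Q : Type*} (M : MooreMachine σ O Q)
    (Ot : ObsTable σ O) : Prop :=
  ∀ s : List σ, Ot.InTableRows s → ∀ e ∈ Ot.E, M.L (M.run M.q0 (s ++ e)) = Ot.T (s ++ e)

/-- `M` computes `f : Σ* → O` if `f(w) = L(δ*(q0, w))` for all `w`. -/
def MooreMachine.Computes {σ O Q : Type*} (M : MooreMachine σ O Q) (f : List σ → O) : Prop :=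
  ∀ w : List σ, f w = M.L (M.run M.q0 w)

/-- `φ` is an isomorphism of Moore machines: a bijection on states preserving the initial
state, the transitions, and the output labeling. -/
def MooreIso {σ O Q₁ Q₂ : Type*} (M₁ : MooreMachine σ O Q₁) (M₂ : MooreMachine σ O Q₂)
    (φ : Q₁ → Q₂) : Prop :=
  Function.Bijective φ ∧ φ M₁.q0 = M₂.q0 ∧
    (∀ q a, φ (M₁.δ q a) = M₂.δ (φ q) a) ∧ ∀ q, M₂.L (φ q) = M₁.L q

universe u

/-! A hypothesis state `row(s)` predicts its own row: reading `e ∈ E` from it outputs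
`T(s·e)`, and a run of the hypothesis machine on a table row `t` ends in `row(t)`. This gives
consistency. Conversely, in any machine `M'` consistent with the table, two table rows reaching
the same state have the same row, so the states reached by access sequences of the `n` distinct
rows are pairwise distinct. If `M'` has at most `n` states, these are all of its states, and
sending the state reached by `t` to `row(t)` is an isomorphism onto the hypothesis machine. -/

namespace MooreMachine

variable {σ O Q : Type*} (M : MooreMachine σ O Q)

@[simp]
theorem run_nil (q : Q) : M.run q [] = q := rfl

@[simp]
theorem run_cons (q : Q) (a : σ) (w : List σ) : M.run q (a :: w) = M.run (M.δ q a) w := rfl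

@[simp]
theorem run_append (q : Q) (u v : List σ) : M.run q (u ++ v) = M.run (M.run q u) v :=
  List.foldl_append

theorem run_append_singleton (q : Q) (w : List σ) (a : σ) :
    M.run q (w ++ [a]) = M.δ (M.run q w) a := by
  simp

end MooreMachine

namespace ObsTable

variable {σ O : Type*} {Ot : ObsTable σ O}

theorem nat_card_HQ [DecidableEq O] : Nat.card Ot.HQ = Ot.numStates := by
  rw [ObsTable.numStates, ← Nat.card_eq_finsetCard]
  exact Nat.card_congr (Equiv.subtypeEquivRight fun _ => Finset.mem_image.symm)

noncomputable def access (q : Ot.HQ) : List σ := q.2.choose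

theorem access_mem (q : Ot.HQ) : Ot.access q ∈ Ot.S := q.2.choose_spec.1

theorem row_access (q : Ot.HQ) : Ot.row (Ot.access q) = q.1 := q.2.choose_spec.2

namespace IsHypothesis

variable {M : MooreMachine σ O Ot.HQ}

theorem run_eq_stateOf (hM : Ot.IsHypothesis M) {s : List σ} (hs : s ∈ Ot.S) :
    M.run M.q0 s = Ot.stateOf s hs := by
  induction s using List.reverseRecOn with
  | nil => exact hM.1
  | append_singleton s a ih =>
    have hs' : s ∈ Ot.S := Ot.prefixClosed _ hs s ⟨[a], rfl⟩
    apply Subtype.ext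
    rw [MooreMachine.run_append_singleton, ih hs']
    exact hM.2.1 s hs' a

theorem run_val (hM : Ot.IsHypothesis M) {t : List σ} (ht : Ot.InTableRows t) :
    (M.run M.q0 t).1 = Ot.row t := by
  rcases ht with hs | ⟨s, hs, a, rfl⟩
  · rw [hM.run_eq_stateOf hs]; rfl
  · rw [MooreMachine.run_append_singleton, hM.run_eq_stateOf hs]
    exact hM.2.1 s hs a

theorem L_run_stateOf (hM : Ot.IsHypothesis M) {s : List σ} (hs : s ∈ Ot.S) {e : List σ}
    (he : e ∈ Ot.E) :
    M.L (M.run (Ot.stateOf s hs) e) = Ot.T (s ++ e) := by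
  induction e generalizing s with
  | nil => simpa using hM.2.2 s hs
  | cons a e ih =>
    have he' : e ∈ Ot.E := Ot.suffixClosed _ he e ⟨[a], rfl⟩
    obtain ⟨s', hs', hrow⟩ := (M.δ (Ot.stateOf s hs) a).2
    have hδ : M.δ (Ot.stateOf s hs) a = Ot.stateOf s' hs' := Subtype.ext hrow.symm
    rw [MooreMachine.run_cons, hδ, ih hs' he']
    simpa [ObsTable.row] using congrFun (hrow.trans (hM.2.1 s hs a)) ⟨e, he'⟩

theorem L_run (hM : Ot.IsHypothesis M) (q : Ot.HQ) {e : List σ} (he : e ∈ Ot.E) :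
    M.L (M.run q e) = q.1 ⟨e, he⟩ := by
  obtain ⟨s, hs, hq⟩ := q.2
  obtain rfl : Ot.stateOf s hs = q := Subtype.ext hq
  exact hM.L_run_stateOf hs he

theorem consistentWith (hM : Ot.IsHypothesis M) : M.ConsistentWith Ot := fun t ht e he => by
  rw [MooreMachine.run_append, hM.L_run _ he, hM.run_val ht]
  rfl

end IsHypothesis

end ObsTable

namespace MooreMachine

variable {σ O Q Q' : Type*} {Ot : ObsTable σ O}

theorem ConsistentWith.row_eq_of_run_eq {M : MooreMachine σ O Q} (hM : M.ConsistentWith Ot)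
    {t₁ t₂ : List σ} (h₁ : Ot.InTableRows t₁) (h₂ : Ot.InTableRows t₂)
    (h : M.run M.q0 t₁ = M.run M.q0 t₂) : Ot.row t₁ = Ot.row t₂ := by
  funext ⟨e, he⟩
  rw [ObsTable.row, ObsTable.row, ← hM t₁ h₁ e he, ← hM t₂ h₂ e he, run_append, run_append,
    h]

theorem mooreIso_of_run_eq {M : MooreMachine σ O Q} {M' : MooreMachine σ O Q'}
    (hM : M.ConsistentWith Ot) (hM' : M'.ConsistentWith Ot) {φ : Q' → Q}
    (hφ : Function.Bijective φ) (hreach : ∀ q, ∃ s ∈ Ot.S, M'.run M'.q0 s = q)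
    (hrun : ∀ t, Ot.InTableRows t → φ (M'.run M'.q0 t) = M.run M.q0 t) : MooreIso M' M φ := by
  refine ⟨hφ, hrun [] (Or.inl Ot.nil_mem_S), fun q a => ?_, fun q => ?_⟩
  all_goals obtain ⟨s, hs, rfl⟩ := hreach q
  · rw [← run_append_singleton, hrun _ (Or.inr ⟨s, hs, a, rfl⟩),
      hrun s (Or.inl hs), run_append_singleton]
  · have h := hM s (Or.inl hs) [] Ot.nil_mem_E
    have h' := hM' s (Or.inl hs) [] Ot.nil_mem_E
    rw [List.append_nil] at h h'
    rw [hrun s (Or.inl hs), h, h']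

theorem ConsistentWith.exists_mooreIso_of_card_le [DecidableEq O] [Finite Q']
    {M : MooreMachine σ O Ot.HQ} {M' : MooreMachine σ O Q'} (hM : Ot.IsHypothesis M)
    (hM' : M'.ConsistentWith Ot) (hcard : Nat.card Q' ≤ Ot.numStates) :
    ∃ φ : Q' → Ot.HQ, MooreIso M' M φ := by
  let g : Ot.HQ → Q' := fun q => M'.run M'.q0 (Ot.access q)
  have hg_inj : Function.Injective g := fun q₁ q₂ h => Subtype.ext <| by
    rw [← Ot.row_access q₁, ← Ot.row_access q₂]
    exact hM'.row_eq_of_run_eq (Or.inl (Ot.access_mem q₁)) (Or.inl (Ot.access_mem q₂)) h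
  let e := Equiv.ofBijective g (hg_inj.bijective_of_nat_card_le (Ot.nat_card_HQ ▸ hcard))
  refine ⟨e.symm, mooreIso_of_run_eq hM.consistentWith hM' e.symm.bijective
    (fun q => ⟨Ot.access (e.symm q), Ot.access_mem _, e.apply_symm_apply q⟩) fun t ht => ?_⟩
  apply Subtype.ext
  rw [hM.run_val ht, ← Ot.row_access]
  exact hM'.row_eq_of_run_eq (Or.inl (Ot.access_mem _)) ht (e.apply_symm_apply _)

end MooreMachine

theorem hypothesis_minimal_consistent_general {σ O : Type*} [DecidableEq O]
    (Ot : ObsTable σ O)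
    (M : MooreMachine σ O Ot.HQ) (hM : Ot.IsHypothesis M) :
    M.ConsistentWith Ot ∧
      ∀ (Q : Type u) [Fintype Q] (M' : MooreMachine σ O Q),
        M'.ConsistentWith Ot → ¬(∃ φ : Q → Ot.HQ, MooreIso M' M φ) →
        Ot.numStates < Fintype.card Q := by
  refine ⟨hM.consistentWith, fun Q _ M' hM' hniso => ?_⟩
  by_contra! hcard
  exact hniso (hM'.exists_mooreIso_of_card_le hM (Nat.card_eq_fintype_card (α := Q) ▸ hcard))

/-- (1) The hypothesis machine of a closed and consistent observation table is
consistent with the table, and (2) every Moore machine consistent with the table that is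
not isomorphic to the hypothesis machine has strictly more than `n = |Q̂|` states. -/
theorem hypothesis_minimal_consistent {σ O : Type*} [Fintype σ] [Nonempty σ]
    [Fintype O] [Nonempty O] [DecidableEq O]
    (Ot : ObsTable σ O) (hclosed : Ot.Closed) (hcons : Ot.Consistent)
    (M : MooreMachine σ O Ot.HQ) (hM : Ot.IsHypothesis M) :
    M.ConsistentWith Ot ∧
      ∀ (Q : Type u) [Fintype Q] (M' : MooreMachine σ O Q),
        M'.ConsistentWith Ot → ¬(∃ φ : Q → Ot.HQ, MooreIso M' M φ) →
        Ot.numStates < Fintype.card Q :=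
  hypothesis_minimal_consistent_general Ot M hM
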